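/- arXiv:2310.01704 — 4 statements merged into one kernel-verified Lean document; each statement's English description precedes it below -/
import Mathlib

section
/- Let T₁ and T₂ be finite trees (connected acyclic simple graphs), each equipped with the uniform initial coloring. If T₁ and T₂ are 1-WL equivalent, i.e., for every round l the multiset {{χ^l(v) : v ∈ V(T₁)}} equals the multiset {{χ^l(v) : v ∈ V(T₂)}}, then T₁ and T₂ are isomorphic as graphs. Equivalently, any two non-isomorphic finite trees are distinguished by 1-WL color refinement. -/
/-- The type of 1-WL colors after `l` rounds of refinement, starting from
initial colors in `C`: the round-`(l+1)` color of a vertex is the pair of its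
round-`l` color and the multiset of round-`l` colors of its neighbors. -/
def WLColor (C : Type u) : ℕ → Type u
  | 0 => C
  | l + 1 => WLColor C l × Multiset (WLColor C l)

/-- 1-WL color refinement on a finite simple graph `G` with initial coloring `χ₀`:
`χ⁰(v) = χ₀ v` and `χ^{l+1}(v) = (χ^l(v), {{χ^l(w) : w ∈ N(v)}})`. -/
noncomputable def wlColoring {V : Type v} {C : Type u} [Fintype V]
    (G : SimpleGraph V) (χ₀ : V → C) : (l : ℕ) → V → WLColor C l
  | 0 => χ₀
  | l + 1 => fun x =>
      (wlColoring G χ₀ l x,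
        ((G.neighborSet x).toFinite.toFinset).val.map (wlColoring G χ₀ l))

/-!
Root `T₁` at any vertex `r₁` and choose `r₂` in `T₂` with the same colour after `L = |V₁|`
rounds. Going down one level at a time, a vertex `w` of depth `k` and its image have equal colours
of round `L - k`, hence equal multisets of round-`(L - k - 1)` colours on their neighbourhoods.
The neighbourhood of a non-root vertex is its parent together with its children, and the parents
already agree, so the children carry equal colour multisets and can be matched injectively.
This produces an injection `V₁ → V₂` preserving depth and parents; as `|V₁| = |V₂|` it is a
bijection, and a parent-preserving bijection of rooted trees is an isomorphism.
-/

theorem Finset.exists_mapsTo_injOn_of_map_val_eq {α β γ : Type*} [Nonempty β] {f : α → γ}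
    {g : β → γ} {s : Finset α} {t : Finset β} (h : s.val.map f = t.val.map g) :
    ∃ φ : α → β, Set.MapsTo φ s t ∧ Set.InjOn φ s ∧ ∀ a ∈ s, g (φ a) = f a := by
  classical
  induction s using Finset.induction_on generalizing t with
  | empty => exact ⟨fun _ => Classical.arbitrary β, by simp [Set.MapsTo], by simp, by simp⟩
  | @insert a s ha ih =>
    rw [Finset.insert_val_of_notMem ha, Multiset.map_cons] at h
    obtain ⟨b, hb, hba⟩ := Multiset.mem_map.1 (h ▸ Multiset.mem_cons_self (f a) _)
    rw [← Multiset.cons_erase hb, Multiset.map_cons, hba, Multiset.cons_inj_right,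
      ← Finset.erase_val] at h
    obtain ⟨φ, hmaps, hinj, hφ⟩ := ih h
    have hφ_ne : ∀ x ∈ s, φ x ≠ b := fun x hx => Finset.ne_of_mem_erase (hmaps hx)
    refine ⟨Function.update φ a b, ?_, ?_, ?_⟩
    · intro x hx
      rcases Finset.mem_insert.1 hx with rfl | hx
      · simpa using hb
      · simpa [ne_of_mem_of_not_mem hx ha] using Finset.mem_of_mem_erase (hmaps hx)
    · intro x hx y hy hxy
      rcases Finset.mem_insert.1 hx with rfl | hx' <;> rcases Finset.mem_insert.1 hy with rfl | hy'
      · rfl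
      · exact absurd (by simpa [ne_of_mem_of_not_mem hy' ha] using hxy.symm) (hφ_ne y hy')
      · exact absurd (by simpa [ne_of_mem_of_not_mem hx' ha] using hxy) (hφ_ne x hx')
      · simp only [Function.update_of_ne (ne_of_mem_of_not_mem hx' ha),
          Function.update_of_ne (ne_of_mem_of_not_mem hy' ha)] at hxy
        exact hinj hx' hy' hxy
    · intro x hx
      rcases Finset.mem_insert.1 hx with rfl | hx
      · simpa using hba
      · simpa [ne_of_mem_of_not_mem hx ha] using hφ x hx

section WL

variable {V V' C : Type*} [Fintype V] [Fintype V']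

theorem wlColoring_succ (G : SimpleGraph V) [DecidableRel G.Adj] (χ : V → C) (l : ℕ) (x : V) :
    wlColoring G χ (l + 1) x =
      (wlColoring G χ l x, (G.neighborFinset x).val.map (wlColoring G χ l)) := by
  simp only [wlColoring]
  congr 3
  ext y
  simp

theorem wlColoring_eq_of_le {G : SimpleGraph V} {G' : SimpleGraph V'} {χ : V → C} {χ' : V' → C}
    {x : V} {x' : V'} {l m : ℕ} (h : wlColoring G χ l x = wlColoring G' χ' l x') (hml : m ≤ l) :
    wlColoring G χ m x = wlColoring G' χ' m x' := by
  induction l, hml using Nat.le_induction with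
  | base => exact h
  | succ l _ ih => exact ih (congrArg Prod.fst h)

end WL

namespace SimpleGraph

variable {V : Type*} {G : SimpleGraph V} {r u p x y : V}

lemma Reachable.exists_adj_dist_add_one (hr : G.Reachable r u) (hu : u ≠ r) :
    ∃ p, G.Adj p u ∧ G.dist r p + 1 = G.dist r u := by
  obtain ⟨q, -, hq⟩ := hr.exists_path_of_dist
  have hnil : ¬q.Nil := Walk.not_nil_of_ne hu.symm
  have hadj := q.adj_penultimate hnil
  refine ⟨q.penultimate, hadj, le_antisymm ?_ ?_⟩
  · calc G.dist r q.penultimate + 1 ≤ q.dropLast.length + 1 := by gcongr; exact dist_le _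
      _ = G.dist r u := by rw [Walk.length_dropLast_add_one hnil, hq]
  · have := hadj.diff_dist_adj (u := r)
    omega

open Classical in
/-- Junk value `u` when `u` has no neighbour closer to `r`, e.g. for `u = r`. -/
noncomputable def parent (G : SimpleGraph V) (r u : V) : V :=
  if h : ∃ p, G.Adj p u ∧ G.dist r p + 1 = G.dist r u then h.choose else u

lemma Connected.parent_spec (hG : G.Connected) (hu : u ≠ r) :
    G.Adj (G.parent r u) u ∧ G.dist r (G.parent r u) + 1 = G.dist r u := by
  have h := (hG r u).exists_adj_dist_add_one hu
  rw [parent, dif_pos h]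
  exact h.choose_spec

lemma Connected.dist_parent (hG : G.Connected) {d : ℕ} (hu : G.dist r u = d + 1) :
    G.dist r (G.parent r u) = d := by
  have := (hG.parent_spec (u := u) (r := r) (by rintro rfl; simp at hu)).2
  omega

lemma IsTree.parent_eq (hG : G.IsTree) (hadj : G.Adj p u) (hd : G.dist r p + 1 = G.dist r u) :
    G.parent r u = p := by
  classical
  obtain ⟨q, hq, -⟩ := (hG.connected r u).exists_path_of_dist
  -- Any such `p` lies on the unique path from `r` to `u`, hence is its penultimate vertex.
  have key : ∀ p, G.Adj p u → G.dist r p + 1 = G.dist r u → p = q.penultimate := by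
    intro p hadj hd
    obtain ⟨P, hP, hPlen⟩ := (hG.connected r p).exists_path_of_dist
    have hu : u ∉ P.support := fun hu => by
      have := (dist_le (P.takeUntil u hu)).trans (P.length_takeUntil_le_length hu)
      omega
    exact hG.isAcyclic.eq_penultimate_of_adj_end hq hadj.symm
      (hG.isAcyclic.mem_support_of_ne_mem_support_of_adj_of_isPath hq hP hadj.symm hu)
  have hu : u ≠ r := by rintro rfl; simp at hd
  obtain ⟨hadj', hd'⟩ := hG.connected.parent_spec hu
  rw [key _ hadj' hd', key _ hadj hd]

lemma IsTree.adj_iff_parent (hG : G.IsTree) :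
    G.Adj x y ↔ (y ≠ r ∧ G.parent r y = x) ∨ (x ≠ r ∧ G.parent r x = y) := by
  constructor
  · intro h
    rcases hG.dist_eq_dist_add_one_of_adj r h with hd | hd
    · exact .inr ⟨by rintro rfl; simp at hd, hG.parent_eq h.symm hd.symm⟩
    · exact .inl ⟨by rintro rfl; simp at hd, hG.parent_eq h hd.symm⟩
  · rintro (⟨hy, rfl⟩ | ⟨hx, rfl⟩)
    · exact (hG.connected.parent_spec hy).1
    · exact (hG.connected.parent_spec hx).1.symm

section children

variable [Fintype V] [DecidableRel G.Adj]

variable (G) in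
noncomputable def children (r w : V) : Finset V :=
  (G.neighborFinset w).filter fun x => G.dist r x = G.dist r w + 1

lemma mem_children {w : V} : x ∈ G.children r w ↔ G.Adj w x ∧ G.dist r x = G.dist r w + 1 := by
  simp [children]

lemma IsTree.parent_eq_of_mem_children (hG : G.IsTree) {w : V} (hx : x ∈ G.children r w) :
    G.parent r x = w :=
  hG.parent_eq (mem_children.1 hx).1 (mem_children.1 hx).2.symm

lemma Connected.mem_children_parent (hG : G.Connected) (hu : u ≠ r) :
    u ∈ G.children r (G.parent r u) :=
  mem_children.2 ⟨(hG.parent_spec hu).1, (hG.parent_spec hu).2.symm⟩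

lemma children_self : G.children r r = G.neighborFinset r :=
  Finset.filter_true_of_mem fun x hx => by simpa using hx

lemma Connected.parent_notMem_children (hG : G.Connected) {w : V} (hw : w ≠ r) :
    G.parent r w ∉ G.children r w := by
  have := (hG.parent_spec hw).2
  rw [mem_children]
  omega

lemma IsTree.insert_parent_children [DecidableEq V] (hG : G.IsTree) {w : V} (hw : w ≠ r) :
    insert (G.parent r w) (G.children r w) = G.neighborFinset w := by
  ext x
  rw [Finset.mem_insert, mem_children, mem_neighborFinset]
  constructor
  · rintro (rfl | ⟨h, -⟩)
    exacts [(hG.connected.parent_spec hw).1.symm, h]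
  · intro h
    rcases hG.dist_eq_dist_add_one_of_adj r h with hd | hd
    exacts [.inl (hG.parent_eq h.symm hd.symm).symm, .inr ⟨h, hd⟩]

end children

end SimpleGraph

open SimpleGraph

section RootedMatching

variable {V₁ V₂ C : Type*} [Fintype V₁] [Fintype V₂] {T₁ : SimpleGraph V₁} {T₂ : SimpleGraph V₂}
  {χ₁ : V₁ → C} {χ₂ : V₂ → C} {r₁ : V₁} {r₂ : V₂} {L d : ℕ} {F : V₁ → V₂}

theorem SimpleGraph.IsTree.map_wlColoring_children_eq [DecidableRel T₁.Adj] [DecidableRel T₂.Adj]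
    (h₁ : T₁.IsTree) (h₂ : T₂.IsTree) {w₁ : V₁} {w₂ : V₂} {k : ℕ}
    (hw : wlColoring T₁ χ₁ (k + 1) w₁ = wlColoring T₂ χ₂ (k + 1) w₂) (hroot : w₁ = r₁ ↔ w₂ = r₂)
    (hparent : w₁ ≠ r₁ →
      wlColoring T₁ χ₁ k (T₁.parent r₁ w₁) = wlColoring T₂ χ₂ k (T₂.parent r₂ w₂)) :
    (T₁.children r₁ w₁).val.map (wlColoring T₁ χ₁ k) =
      (T₂.children r₂ w₂).val.map (wlColoring T₂ χ₂ k) := by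
  classical
  have hN := congrArg Prod.snd hw
  rw [wlColoring_succ, wlColoring_succ] at hN
  by_cases h : w₁ = r₁
  · obtain rfl := h
    obtain rfl := hroot.1 rfl
    rwa [children_self, children_self]
  · have h' : w₂ ≠ r₂ := mt hroot.2 h
    rw [← h₁.insert_parent_children h, ← h₂.insert_parent_children h',
      Finset.insert_val_of_notMem (h₁.connected.parent_notMem_children h),
      Finset.insert_val_of_notMem (h₂.connected.parent_notMem_children h'),
      Multiset.map_cons, Multiset.map_cons, hparent h] at hN
    exact (Multiset.cons_inj_right _).1 hN

variable (T₁ T₂ χ₁ χ₂ r₁ r₂ L) in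
structure IsDepthMatching (d : ℕ) (F : V₁ → V₂) : Prop where
  dist_eq : ∀ u, T₁.dist r₁ u ≤ d → T₂.dist r₂ (F u) = T₁.dist r₁ u
  wlColoring_eq : ∀ u, T₁.dist r₁ u ≤ d →
    wlColoring T₂ χ₂ (L - T₁.dist r₁ u) (F u) = wlColoring T₁ χ₁ (L - T₁.dist r₁ u) u
  injOn : Set.InjOn F {u | T₁.dist r₁ u ≤ d}
  parent_comp : ∀ u, T₁.dist r₁ u ≤ d → u ≠ r₁ → T₂.parent r₂ (F u) = F (T₁.parent r₁ u)

theorem isDepthMatching_zero (h₁ : T₁.Connected)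
    (h : wlColoring T₁ χ₁ L r₁ = wlColoring T₂ χ₂ L r₂) :
    IsDepthMatching T₁ T₂ χ₁ χ₂ r₁ r₂ L 0 fun _ => r₂ := by
  have hr : ∀ u, T₁.dist r₁ u ≤ 0 → u = r₁ := fun u hu =>
    (h₁.dist_eq_zero_iff.1 (Nat.le_zero.1 hu)).symm
  refine ⟨fun u hu => ?_, fun u hu => ?_, fun u hu v hv _ => ?_, fun u hu hne => ?_⟩
  · simp [hr u hu]
  · rw [hr u hu, dist_self, Nat.sub_zero]
    exact h.symm
  · rw [hr u hu, hr v hv]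
  · exact absurd (hr u hu) hne

theorem IsDepthMatching.exists_children_map [DecidableRel T₁.Adj] [DecidableRel T₂.Adj]
    (h₁ : T₁.IsTree) (h₂ : T₂.IsTree) (hF : IsDepthMatching T₁ T₂ χ₁ χ₂ r₁ r₂ L d F)
    (hdL : d < L) {w : V₁} (hw : T₁.dist r₁ w = d) :
    ∃ φ : V₁ → V₂, Set.MapsTo φ (T₁.children r₁ w) (T₂.children r₂ (F w)) ∧
      Set.InjOn φ (T₁.children r₁ w) ∧ ∀ x ∈ T₁.children r₁ w,
        wlColoring T₂ χ₂ (L - (d + 1)) (φ x) = wlColoring T₁ χ₁ (L - (d + 1)) x := by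
  have : Nonempty V₂ := ⟨r₂⟩
  refine Finset.exists_mapsTo_injOn_of_map_val_eq (h₁.map_wlColoring_children_eq h₂ ?_ ?_ ?_)
  · have := (hF.wlColoring_eq w hw.le).symm
    rwa [hw, show L - d = L - (d + 1) + 1 by omega] at this
  · rw [eq_comm, ← h₁.connected.dist_eq_zero_iff, eq_comm (b := r₂),
      ← h₂.connected.dist_eq_zero_iff, hF.dist_eq w hw.le]
  · intro hw₁
    have hp := (h₁.connected.parent_spec hw₁).2
    rw [hF.parent_comp w hw.le hw₁]
    exact (wlColoring_eq_of_le (hF.wlColoring_eq _ (by omega)) (by omega)).symm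

theorem IsDepthMatching.succ_of_extend [DecidableRel T₂.Adj] (h₁ : T₁.IsTree) (h₂ : T₂.IsTree)
    (hF : IsDepthMatching T₁ T₂ χ₁ χ₂ r₁ r₂ L d F) {F' : V₁ → V₂}
    (hold : ∀ u, T₁.dist r₁ u ≤ d → F' u = F u)
    (hnew : ∀ u, T₁.dist r₁ u = d + 1 → F' u ∈ T₂.children r₂ (F (T₁.parent r₁ u)) ∧
      wlColoring T₂ χ₂ (L - (d + 1)) (F' u) = wlColoring T₁ χ₁ (L - (d + 1)) u)
    (hinj : ∀ u v, T₁.dist r₁ u = d + 1 → T₁.dist r₁ v = d + 1 →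
      T₁.parent r₁ u = T₁.parent r₁ v → F' u = F' v → u = v) :
    IsDepthMatching T₁ T₂ χ₁ χ₂ r₁ r₂ L (d + 1) F' := by
  have hdist : ∀ u, T₁.dist r₁ u ≤ d + 1 → T₂.dist r₂ (F' u) = T₁.dist r₁ u := by
    intro u hu
    rcases Nat.lt_or_eq_of_le hu with hu | hu
    · rw [hold u (by omega), hF.dist_eq u (by omega)]
    · have hp := h₁.connected.dist_parent hu
      rw [(mem_children.1 (hnew u hu).1).2, hF.dist_eq _ hp.le, hp, hu]
  refine ⟨hdist, fun u hu => ?_, fun u hu v hv huv => ?_, fun u hu hur => ?_⟩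
  · rcases Nat.lt_or_eq_of_le hu with hu | hu
    · rw [hold u (by omega)]
      exact hF.wlColoring_eq u (by omega)
    · rw [hu]
      exact (hnew u hu).2
  · have hdist_eq : T₁.dist r₁ u = T₁.dist r₁ v := by
      rw [← hdist u hu, ← hdist v hv, huv]
    rcases Nat.lt_or_eq_of_le hu with hu' | hu'
    · rw [hold u (by omega), hold v (by omega)] at huv
      exact hF.injOn (show T₁.dist r₁ u ≤ d by omega) (show T₁.dist r₁ v ≤ d by omega) huv
    · -- Two new vertices with the same image have the same parent, as `T₂` is a tree.
      refine hinj u v hu' (hdist_eq ▸ hu') (hF.injOn (h₁.connected.dist_parent hu').le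
        (h₁.connected.dist_parent (hdist_eq ▸ hu')).le ?_) huv
      rw [← h₂.parent_eq_of_mem_children (hnew u hu').1,
        ← h₂.parent_eq_of_mem_children (hnew v (hdist_eq ▸ hu')).1, huv]
  · rw [hold (T₁.parent r₁ u) (by have := (h₁.connected.parent_spec hur).2; omega)]
    rcases Nat.lt_or_eq_of_le hu with hu' | hu'
    · rw [hold u (by omega)]
      exact hF.parent_comp u (by omega) hur
    · exact h₂.parent_eq_of_mem_children (hnew u hu').1

theorem IsDepthMatching.exists_succ [DecidableRel T₁.Adj] [DecidableRel T₂.Adj]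
    (h₁ : T₁.IsTree) (h₂ : T₂.IsTree) (hF : IsDepthMatching T₁ T₂ χ₁ χ₂ r₁ r₂ L d F)
    (hdL : d < L) : ∃ F', IsDepthMatching T₁ T₂ χ₁ χ₂ r₁ r₂ L (d + 1) F' := by
  have hφ : ∀ w, ∃ φ : V₁ → V₂, T₁.dist r₁ w = d →
      Set.MapsTo φ (T₁.children r₁ w) (T₂.children r₂ (F w)) ∧
      Set.InjOn φ (T₁.children r₁ w) ∧ ∀ x ∈ T₁.children r₁ w,
        wlColoring T₂ χ₂ (L - (d + 1)) (φ x) = wlColoring T₁ χ₁ (L - (d + 1)) x := fun w => by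
    by_cases hw : T₁.dist r₁ w = d
    · obtain ⟨φ, hφ⟩ := hF.exists_children_map h₁ h₂ hdL hw
      exact ⟨φ, fun _ => hφ⟩
    · exact ⟨F, fun hw' => absurd hw' hw⟩
  choose φ hφ using hφ
  have hnew : ∀ u, T₁.dist r₁ u = d + 1 →
      T₁.dist r₁ (T₁.parent r₁ u) = d ∧ u ∈ T₁.children r₁ (T₁.parent r₁ u) := fun u hu => by
    have hur : u ≠ r₁ := by rintro rfl; simp at hu
    exact ⟨h₁.connected.dist_parent hu, h₁.connected.mem_children_parent hur⟩
  refine ⟨_, hF.succ_of_extend (F' := fun u => if T₁.dist r₁ u ≤ d then F u else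
    φ (T₁.parent r₁ u) u) h₁ h₂ (fun u hu => if_pos hu) (fun u hu => ?_) ?_⟩
  · obtain ⟨hp, hmem⟩ := hnew u hu
    simp only [if_neg (show ¬T₁.dist r₁ u ≤ d by omega)]
    exact ⟨(hφ _ hp).1 hmem, (hφ _ hp).2.2 u hmem⟩
  · intro u v hu hv hpar huv
    simp only [if_neg (show ¬T₁.dist r₁ u ≤ d by omega),
      if_neg (show ¬T₁.dist r₁ v ≤ d by omega), hpar] at huv
    exact (hφ _ (hnew v hv).1).2.1 (hpar ▸ (hnew u hu).2) (hnew v hv).2 huv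

theorem exists_isDepthMatching (h₁ : T₁.IsTree) (h₂ : T₂.IsTree)
    (h : wlColoring T₁ χ₁ L r₁ = wlColoring T₂ χ₂ L r₂) (hdL : d ≤ L) :
    ∃ F, IsDepthMatching T₁ T₂ χ₁ χ₂ r₁ r₂ L d F := by
  classical
  induction d with
  | zero => exact ⟨_, isDepthMatching_zero h₁.connected h⟩
  | succ d ih =>
    obtain ⟨F, hF⟩ := ih (by omega)
    exact hF.exists_succ h₁ h₂ (by omega)

end RootedMatching

def SimpleGraph.IsTree.isoOfMapParent {V₁ V₂ : Type*} {T₁ : SimpleGraph V₁} {T₂ : SimpleGraph V₂}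
    (h₁ : T₁.IsTree) (h₂ : T₂.IsTree) {r₁ : V₁} {r₂ : V₂} (f : V₁ ≃ V₂) (hr : f r₁ = r₂)
    (hf : ∀ u, u ≠ r₁ → T₂.parent r₂ (f u) = f (T₁.parent r₁ u)) : T₁ ≃g T₂ where
  toEquiv := f
  map_rel_iff' {x y} := by
    subst hr
    have key : ∀ x y, (f y ≠ f r₁ ∧ T₂.parent (f r₁) (f y) = f x) ↔ (y ≠ r₁ ∧ T₁.parent r₁ y = x) :=
      fun x y => by
        rw [f.injective.ne_iff]
        exact and_congr_right fun hy => by rw [hf y hy, f.injective.eq_iff]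
    rw [h₁.adj_iff_parent (r := r₁), h₂.adj_iff_parent (r := f r₁), key, key]

/-- Any two finite trees that are 1-WL equivalent (with the uniform initial
coloring) are isomorphic; equivalently, 1-WL color refinement distinguishes
any two non-isomorphic finite trees. -/
theorem wl_equivalent_trees_isomorphic
    {V₁ V₂ : Type} [Fintype V₁] [Fintype V₂]
    (T₁ : SimpleGraph V₁) (T₂ : SimpleGraph V₂)
    (h₁ : T₁.IsTree) (h₂ : T₂.IsTree)
    (hWL : ∀ l : ℕ,
      (Finset.univ : Finset V₁).val.map (wlColoring T₁ (fun _ => ()) l) =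
      (Finset.univ : Finset V₂).val.map (wlColoring T₂ (fun _ => ()) l)) :
    Nonempty (T₁ ≃g T₂) := by
  obtain ⟨r₁⟩ := h₁.connected.nonempty
  have hcard : Fintype.card V₁ = Fintype.card V₂ := by
    simpa using congrArg Multiset.card (hWL 0)
  set L := Fintype.card V₁
  have hdepth : ∀ u, T₁.dist r₁ u ≤ L := fun u => by
    obtain ⟨p, hp, hlen⟩ := h₁.connected.exists_path_of_dist r₁ u
    exact hlen ▸ hp.length_lt.le
  obtain ⟨r₂, -, hr₂⟩ := Multiset.mem_map.1 (hWL L ▸ Multiset.mem_map_of_mem _ (Finset.mem_univ r₁))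
  obtain ⟨F, hF⟩ := exists_isDepthMatching h₁ h₂ hr₂.symm le_rfl
  have hF_bij : Function.Bijective F := (Fintype.bijective_iff_injective_and_card F).2
    ⟨fun u v huv => hF.injOn (hdepth u) (hdepth v) huv, hcard⟩
  have hroot : F r₁ = r₂ :=
    (h₂.connected.dist_eq_zero_iff.1 (by simpa using hF.dist_eq r₁ (by simp))).symm
  exact ⟨h₁.isoOfMapParent h₂ (Equiv.ofBijective F hF_bij) hroot
    fun u hu => hF.parent_comp u (hdepth u) hu⟩
end

section
/- Let G be a finite simple graph with initial node features x⁰ : V(G) → X, and let the message-passing updates be x^{l+1}_i = Ψ(x^l_i, Σ_{j ∈ N(i)} Φ(x^l_i, x^l_j)) for arbitrary functions Ψ and Φ, where the sum is multiset aggregation over the neighborhood N(i). Let χ^l be the 1-WL coloring obtained from the initial coloring χ⁰ = x⁰. Then for every layer l and all vertices v, w ∈ V(G): if χ^l(v) = χ^l(w), then x^l_v = x^l_w. That is, the layer-l feature of a vertex is a function of its round-l 1-WL color. -/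
/-- Message-passing updates with arbitrary update function `Ψ`, message
function `Φ`, and sum aggregation over the neighborhood:
`x⁰_i = x₀ i` and `x^{l+1}_i = Ψ (x^l_i) (Σ_{j ∈ N(i)} Φ (x^l_i) (x^l_j))`. -/
noncomputable def mpnn {V : Type v} {X : Type u} {M : Type w} [Fintype V] [AddCommMonoid M]
    (G : SimpleGraph V) (Ψ : X → M → X) (Φ : X → X → M) (x₀ : V → X) :
    (l : ℕ) → V → X
  | 0 => x₀
  | l + 1 => fun i =>
      Ψ (mpnn G Ψ Φ x₀ l i)
        (∑ j ∈ (G.neighborSet i).toFinite.toFinset,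
          Φ (mpnn G Ψ Φ x₀ l i) (mpnn G Ψ Φ x₀ l j))

/-- MPNN features are refined by 1-WL colors: if two vertices get the same
round-`l` 1-WL color (starting from the initial coloring `χ⁰ = x⁰`), then they
carry the same layer-`l` MPNN feature, for arbitrary `Ψ` and `Φ`. -/
theorem mpnn_feature_determined_by_wl_color
    {V : Type} {X : Type} {M : Type} [Fintype V] [AddCommMonoid M]
    (G : SimpleGraph V) (Ψ : X → M → X) (Φ : X → X → M) (x₀ : V → X) :
    ∀ (l : ℕ) (v w : V),
      wlColoring G x₀ l v = wlColoring G x₀ l w →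
      mpnn G Ψ Φ x₀ l v = mpnn G Ψ Φ x₀ l w := by
  intro l
  induction l with
  | zero => intro v w h; exact h
  | succ l ih =>
    intro v w h
    have h' : (wlColoring G x₀ (l+1) v : WLColor X l × Multiset (WLColor X l))
        = wlColoring G x₀ (l+1) w := h
    have h1 : wlColoring G x₀ l v = wlColoring G x₀ l w := congrArg Prod.fst h'
    have h2 : ((G.neighborSet v).toFinite.toFinset).val.map (wlColoring G x₀ l)
        = ((G.neighborSet w).toFinite.toFinset).val.map (wlColoring G x₀ l) :=
      congrArg Prod.snd h' 
    -- a function from colors to features extending mpnn along wlColoring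
    classical
    by_cases hX : Nonempty X
    · obtain ⟨x⟩ := hX
      set f : WLColor X l → X := fun c =>
        if hc : ∃ u, wlColoring G x₀ l u = c then mpnn G Ψ Φ x₀ l hc.choose else x with hf
      have hfe : ∀ u, f (wlColoring G x₀ l u) = mpnn G Ψ Φ x₀ l u := by
        intro u
        have hc : ∃ u', wlColoring G x₀ l u' = wlColoring G x₀ l u := ⟨u, rfl⟩
        simp only [hf, dif_pos hc]
        exact ih _ _ hc.choose_spec
      have hmap : ((G.neighborSet v).toFinite.toFinset).val.map (mpnn G Ψ Φ x₀ l)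
          = ((G.neighborSet w).toFinite.toFinset).val.map (mpnn G Ψ Φ x₀ l) := by
        have : ∀ u : V, mpnn G Ψ Φ x₀ l = fun u => f (wlColoring G x₀ l u) := by
          intro _; funext u; exact (hfe u).symm
        calc ((G.neighborSet v).toFinite.toFinset).val.map (mpnn G Ψ Φ x₀ l)
            = (((G.neighborSet v).toFinite.toFinset).val.map (wlColoring G x₀ l)).map f := by
              rw [Multiset.map_map]; exact Multiset.map_congr rfl (fun u _ => (hfe u).symm)
          _ = (((G.neighborSet w).toFinite.toFinset).val.map (wlColoring G x₀ l)).map f := by rw [h2]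
          _ = ((G.neighborSet w).toFinite.toFinset).val.map (mpnn G Ψ Φ x₀ l) := by
              rw [Multiset.map_map]; exact Multiset.map_congr rfl (fun u _ => hfe u)
      have he := ih v w h1
      simp only [mpnn, he]
      congr 1
      have : ∀ (z : V), (∑ j ∈ (G.neighborSet z).toFinite.toFinset,
          Φ (mpnn G Ψ Φ x₀ l w) (mpnn G Ψ Φ x₀ l j))
          = ((((G.neighborSet z).toFinite.toFinset).val.map (mpnn G Ψ Φ x₀ l)).map
            (Φ (mpnn G Ψ Φ x₀ l w))).sum := by
        intro z
        rw [Finset.sum, Multiset.map_map]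
        rfl
      rw [this v, this w, hmap]
    · exact absurd ⟨x₀ v⟩ hX
end

section
/- Let G and H be finite simple graphs with initial node features x⁰_G : V(G) → X and x⁰_H : V(H) → X, viewed also as initial colorings. Suppose G and H are 1-WL equivalent at every round, i.e., for every l the multiset {{χ^l(v) : v ∈ V(G)}} equals {{χ^l(v) : v ∈ V(H)}} (colors computed on the disjoint union of G and H). Then for any MPNN given by arbitrary functions Ψ, Φ with sum aggregation, and for every layer l, the multiset {{x^l_v : v ∈ V(G)}} equals the multiset {{x^l_v : v ∈ V(H)}}; in particular the sum readouts Σ_{v ∈ V(G)} x^l_v and Σ_{v ∈ V(H)} x^l_v are equal. Hence an MPNN with sum readout cannot distinguish 1-WL-equivalent graphs. -/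
/-- Decode an MPNN feature from a WL color. -/
noncomputable def wlDecode {X M : Type} [AddCommMonoid M]
    (Ψ : X → M → X) (Φ : X → X → M) : (l : ℕ) → WLColor X l → X
  | 0 => fun c => c
  | l + 1 => fun c =>
      Ψ (wlDecode Ψ Φ l c.1)
        ((c.2.map (fun d => Φ (wlDecode Ψ Φ l c.1) (wlDecode Ψ Φ l d))).sum)

lemma neighbor_inl {V₁ V₂ : Type} [Fintype V₁] [Fintype V₂]
    (G : SimpleGraph V₁) (H : SimpleGraph V₂) (v : V₁) :
    ((G ⊕g H).neighborSet (Sum.inl v)).toFinite.toFinset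
      = (G.neighborSet v).toFinite.toFinset.map ⟨Sum.inl, Sum.inl_injective⟩ := by
  ext w
  cases w with
  | inl w => simp [SimpleGraph.neighborSet]
  | inr w => simp [SimpleGraph.neighborSet]

lemma neighbor_inr {V₁ V₂ : Type} [Fintype V₁] [Fintype V₂]
    (G : SimpleGraph V₁) (H : SimpleGraph V₂) (v : V₂) :
    ((G ⊕g H).neighborSet (Sum.inr v)).toFinite.toFinset
      = (H.neighborSet v).toFinite.toFinset.map ⟨Sum.inr, Sum.inr_injective⟩ := by
  ext w
  cases w with
  | inl w => simp [SimpleGraph.neighborSet]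
  | inr w => simp [SimpleGraph.neighborSet]

lemma wl_inl {V₁ V₂ X : Type} [Fintype V₁] [Fintype V₂]
    (G : SimpleGraph V₁) (H : SimpleGraph V₂) (xG : V₁ → X) (xH : V₂ → X) :
    ∀ (l : ℕ) (v : V₁),
      wlColoring (G ⊕g H) (Sum.elim xG xH) l (Sum.inl v) = wlColoring G xG l v := by
  intro l
  induction l with
  | zero => intro v; rfl
  | succ l ih =>
      intro v
      show (_, _) = (_, _)
      rw [ih, neighbor_inl]
      congr 1
      simp only [Finset.map_val, Multiset.map_map]
      exact Multiset.map_congr rfl (fun w _ => ih w)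

lemma wl_inr {V₁ V₂ X : Type} [Fintype V₁] [Fintype V₂]
    (G : SimpleGraph V₁) (H : SimpleGraph V₂) (xG : V₁ → X) (xH : V₂ → X) :
    ∀ (l : ℕ) (v : V₂),
      wlColoring (G ⊕g H) (Sum.elim xG xH) l (Sum.inr v) = wlColoring H xH l v := by
  intro l
  induction l with
  | zero => intro v; rfl
  | succ l ih =>
      intro v
      show (_, _) = (_, _)
      rw [ih, neighbor_inr]
      congr 1
      simp only [Finset.map_val, Multiset.map_map]
      exact Multiset.map_congr rfl (fun w _ => ih w)

lemma mpnn_eq_decode {V X M : Type} [Fintype V] [AddCommMonoid M]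
    (G : SimpleGraph V) (Ψ : X → M → X) (Φ : X → X → M) (x₀ : V → X) :
    ∀ (l : ℕ) (v : V), mpnn G Ψ Φ x₀ l v = wlDecode Ψ Φ l (wlColoring G x₀ l v) := by
  intro l
  induction l with
  | zero => intro v; rfl
  | succ l ih =>
      intro v
      simp only [mpnn, wlColoring, wlDecode]
      rw [ih]
      congr 1
      rw [Finset.sum, Multiset.map_map]
      exact congrArg Multiset.sum (Multiset.map_congr rfl (fun w _ => by
        simp only [Function.comp_apply]; rw [ih]))

/-- An MPNN with sum aggregation and sum readout cannot distinguish 1-WL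
equivalent graphs: if the 1-WL color multisets of `G` and `H` (computed on
their disjoint union `G ⊕g H`, with initial colors the initial node features)
agree at every round, then at every layer the multisets of MPNN node features
of `G` and of `H` are equal, and in particular the sum readouts are equal. -/
theorem mpnn_cannot_distinguish_wl_equivalent_graphs
    {V₁ V₂ : Type} {X : Type} {M : Type} [Fintype V₁] [Fintype V₂]
    [AddCommMonoid M] [AddCommMonoid X]
    (G : SimpleGraph V₁) (H : SimpleGraph V₂)
    (xG : V₁ → X) (xH : V₂ → X)
    (hWL : ∀ l : ℕ,
      (Finset.univ : Finset V₁).val.map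
          (fun v => wlColoring (G ⊕g H) (Sum.elim xG xH) l (Sum.inl v)) =
      (Finset.univ : Finset V₂).val.map
          (fun v => wlColoring (G ⊕g H) (Sum.elim xG xH) l (Sum.inr v)))
    (Ψ : X → M → X) (Φ : X → X → M) :
    ∀ l : ℕ,
      (Finset.univ : Finset V₁).val.map (mpnn G Ψ Φ xG l) =
        (Finset.univ : Finset V₂).val.map (mpnn H Ψ Φ xH l) ∧
      (∑ v : V₁, mpnn G Ψ Φ xG l v) = (∑ v : V₂, mpnn H Ψ Φ xH l v) := by
  intro l
  have key : (Finset.univ : Finset V₁).val.map (mpnn G Ψ Φ xG l) =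
      (Finset.univ : Finset V₂).val.map (mpnn H Ψ Φ xH l) := by
    have h1 : (Finset.univ : Finset V₁).val.map (mpnn G Ψ Φ xG l)
        = ((Finset.univ : Finset V₁).val.map
            (fun v => wlColoring (G ⊕g H) (Sum.elim xG xH) l (Sum.inl v))).map
            (wlDecode Ψ Φ l) := by
      rw [Multiset.map_map]
      exact Multiset.map_congr rfl (fun v _ => by
        rw [Function.comp_apply, wl_inl, mpnn_eq_decode])
    have h2 : (Finset.univ : Finset V₂).val.map (mpnn H Ψ Φ xH l)
        = ((Finset.univ : Finset V₂).val.map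
            (fun v => wlColoring (G ⊕g H) (Sum.elim xG xH) l (Sum.inr v))).map
            (wlDecode Ψ Φ l) := by
      rw [Multiset.map_map]
      exact Multiset.map_congr rfl (fun v _ => by
        rw [Function.comp_apply, wl_inr, mpnn_eq_decode])
    rw [h1, h2, hWL l]
  refine ⟨key, ?_⟩
  rw [Finset.sum, Finset.sum, key]
end

section
/- Let G₁ be the 10-vertex simple graph formed by two 6-cycles sharing a common edge (the decalin skeleton), and let G₂ be the 10-vertex simple graph formed by two disjoint 5-cycles joined by a single bridge edge (the bicyclopentyl skeleton). Then G₁ and G₂ are non-isomorphic, yet with the uniform initial coloring they are 1-WL equivalent: for every round l, the multiset {{χ^l(v) : v ∈ V(G₁)}} equals the multiset {{χ^l(v) : v ∈ V(G₂)}}. Thus 1-WL fails to distinguish two small molecular graphs built from rings, while their junction trees (two size-6 ring clusters sharing atoms for G₁, versus two size-5 ring clusters joined through a bond cluster for G₂) are non-isomorphic. -/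
/-- The decalin skeleton: two 6-cycles `0-1-2-3-4-5-0` and `0-6-7-8-9-5-0`
sharing the common edge `{0, 5}`, on 10 vertices. -/
def decalinGraph : SimpleGraph (Fin 10) :=
  SimpleGraph.fromEdgeSet
    {s(0, 1), s(1, 2), s(2, 3), s(3, 4), s(4, 5), s(5, 0),
     s(0, 6), s(6, 7), s(7, 8), s(8, 9), s(9, 5)}

/-- The bicyclopentyl skeleton: two disjoint 5-cycles `0-1-2-3-4-0` and
`5-6-7-8-9-5` joined by the single bridge edge `{0, 5}`, on 10 vertices. -/
def bicyclopentylGraph : SimpleGraph (Fin 10) :=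
  SimpleGraph.fromEdgeSet
    {s(0, 1), s(1, 2), s(2, 3), s(3, 4), s(4, 0),
     s(5, 6), s(6, 7), s(7, 8), s(8, 9), s(9, 5), s(0, 5)}


private def cls : Fin 10 → Fin 3 := ![0,1,2,2,1,0,1,2,2,1]

private def nbD : Fin 10 → Finset (Fin 10) :=
  ![{5,1,6},{0,2},{1,3},{4,2},{5,3},{0,4,9},{0,7},{6,8},{9,7},{5,8}]

private def nbB : Fin 10 → Finset (Fin 10) :=
  ![{5,1,4},{0,2},{1,3},{4,2},{0,3},{0,6,9},{5,7},{6,8},{9,7},{5,8}]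

private lemma nbD_eq (x : Fin 10) :
    ((decalinGraph.neighborSet x).toFinite.toFinset) = nbD x := by
  fin_cases x <;>
  · ext y
    simp only [Set.Finite.mem_toFinset, SimpleGraph.mem_neighborSet, decalinGraph,
      SimpleGraph.fromEdgeSet_adj, Set.mem_insert_iff, Set.mem_singleton_iff]
    revert y
    decide

private lemma nbB_eq (x : Fin 10) :
    ((bicyclopentylGraph.neighborSet x).toFinite.toFinset) = nbB x := by
  fin_cases x <;>
  · ext y
    simp only [Set.Finite.mem_toFinset, SimpleGraph.mem_neighborSet, bicyclopentylGraph,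
      SimpleGraph.fromEdgeSet_adj, Set.mem_insert_iff, Set.mem_singleton_iff]
    revert y
    decide

private lemma wl_key (l : ℕ) :
    ∃ g : Fin 3 → WLColor Unit l,
      (wlColoring decalinGraph (fun _ => ()) l = fun v => g (cls v)) ∧
      (wlColoring bicyclopentylGraph (fun _ => ()) l = fun v => g (cls v)) := by
  induction l with
  | zero => exact ⟨fun _ => (), rfl, rfl⟩
  | succ l ih =>
    obtain ⟨g, h1, h2⟩ := ih
    refine ⟨fun c => (g c,
        if c = 0 then {g 0, g 1, g 1} else if c = 1 then {g 0, g 2} else {g 1, g 2}),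
      ?_, ?_⟩
    · funext v
      show (wlColoring decalinGraph (fun _ => ()) l v,
        ((decalinGraph.neighborSet v).toFinite.toFinset).val.map
          (wlColoring decalinGraph (fun _ => ()) l)) = _
      rw [nbD_eq, h1]
      fin_cases v <;> rfl
    · funext v
      show (wlColoring bicyclopentylGraph (fun _ => ()) l v,
        ((bicyclopentylGraph.neighborSet v).toFinite.toFinset).val.map
          (wlColoring bicyclopentylGraph (fun _ => ()) l)) = _
      rw [nbB_eq, h2]
      fin_cases v <;> rfl

private def col : Fin 10 → ZMod 2 := ![0,1,0,1,0,1,1,0,1,0]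

private lemma decalin_proper : ∀ x y : Fin 10, decalinGraph.Adj x y → col x ≠ col y := by
  have H : ∀ x y : Fin 10,
      ((s(x,y) = s(0,1) ∨ s(x,y) = s(1,2) ∨ s(x,y) = s(2,3) ∨ s(x,y) = s(3,4) ∨
        s(x,y) = s(4,5) ∨ s(x,y) = s(5,0) ∨ s(x,y) = s(0,6) ∨ s(x,y) = s(6,7) ∨
        s(x,y) = s(7,8) ∨ s(x,y) = s(8,9) ∨ s(x,y) = s(9,5)) ∧ x ≠ y) → col x ≠ col y := by
    decide
  intro x y h
  refine H x y ?_
  simpa only [decalinGraph, SimpleGraph.fromEdgeSet_adj, Set.mem_insert_iff,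
    Set.mem_singleton_iff] using h

private lemma badj : bicyclopentylGraph.Adj 0 1 ∧ bicyclopentylGraph.Adj 1 2 ∧
    bicyclopentylGraph.Adj 2 3 ∧ bicyclopentylGraph.Adj 3 4 ∧ bicyclopentylGraph.Adj 4 0 := by
  refine ⟨?_, ?_, ?_, ?_, ?_⟩ <;>
  · simp only [bicyclopentylGraph, SimpleGraph.fromEdgeSet_adj, Set.mem_insert_iff,
      Set.mem_singleton_iff]
    decide

private lemma noniso : ¬ Nonempty (decalinGraph ≃g bicyclopentylGraph) := by
  rintro ⟨e⟩
  set c : Fin 10 → ZMod 2 := fun v => col (e.symm v) with hc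
  have hp : ∀ x y : Fin 10, bicyclopentylGraph.Adj x y → c x ≠ c y := by
    intro x y h
    exact decalin_proper _ _ (e.symm.map_adj_iff.mpr h)
  obtain ⟨h01, h12, h23, h34, h40⟩ := badj
  have step : ∀ a b : ZMod 2, a ≠ b → a = b + 1 := by decide
  have e01 := step _ _ (hp _ _ h01)
  have e12 := step _ _ (hp _ _ h12)
  have e23 := step _ _ (hp _ _ h23)
  have e34 := step _ _ (hp _ _ h34)
  have e40 := step _ _ (hp _ _ h40)
  have h : c 0 = c 0 + 5 := by
    linear_combination e01 + e12 + e23 + e34 + e40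
  have h5 : (5 : ZMod 2) = 0 := (left_eq_add).mp h
  rw [show ((5 : ZMod 2)) = 1 from by decide] at h5
  exact one_ne_zero h5

/-- The decalin skeleton (two 6-rings sharing an edge) and the bicyclopentyl
skeleton (two 5-rings joined by a bridge) are non-isomorphic 10-vertex graphs,
yet with the uniform initial coloring their 1-WL color multisets agree at
every round: 1-WL fails to distinguish these two molecular graphs. -/
theorem wl_fails_on_decalin_vs_bicyclopentyl :
    (¬ Nonempty (decalinGraph ≃g bicyclopentylGraph)) ∧
    ∀ l : ℕ,
      (Finset.univ : Finset (Fin 10)).val.map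
          (wlColoring decalinGraph (fun _ => ()) l) =
      (Finset.univ : Finset (Fin 10)).val.map
          (wlColoring bicyclopentylGraph (fun _ => ()) l) := by
  refine ⟨noniso, fun l => ?_⟩
  obtain ⟨g, h1, h2⟩ := wl_key l
  rw [h1, h2]
end
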